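/- For all indices 1 ≤ i, j ≤ ℓ with i ≠ j, the difference operators satisfy the Yangian mixed raising relation: (u − v)·[E_i(u), E_j(v)] = −(iħ/2)·d_i·a_{ij}·(E_i(u)∘(E_j(u) − E_j(v)) + (E_j(u) − E_j(v))∘E_i(u)) − (E_i^{(0)}∘(E_j(u) − E_j(v)) − (E_j(u) − E_j(v))∘E_i^{(0)}), as an identity of ℂ(u,v)-linear endomorphisms of F, where [A,B] := A∘B − B∘A. -/
import Mathlib


open MvPolynomial Complex Finset

noncomputable section

/-- Variables: the spectral variables (indexed by `Fin 2`) and the `γ_{i,k}`. -/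
abbrev Var (ℓ : ℕ) (m : Fin ℓ → ℕ) := Fin 2 ⊕ ((i : Fin ℓ) × Fin (m i))

/-- The field of rational functions over `ℂ` in the spectral variables and the `γ_{i,k}`. -/
abbrev FF (ℓ : ℕ) (m : Fin ℓ → ℕ) := FractionRing (MvPolynomial (Var ℓ m) ℂ)

variable (ℓ : ℕ) (m : Fin ℓ → ℕ)

/-- The embedding of constants `ℂ → F`. -/
def cstHom : ℂ →+* FF ℓ m :=
  (algebraMap (MvPolynomial (Var ℓ m) ℂ) (FF ℓ m)).comp (C : ℂ →+* MvPolynomial (Var ℓ m) ℂ)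

def cst (c : ℂ) : FF ℓ m := cstHom ℓ m c

/-- The variable `γ_{i,k}` as an element of `F`. -/
def gam (i : Fin ℓ) (k : Fin (m i)) : FF ℓ m :=
  algebraMap (MvPolynomial (Var ℓ m) ℂ) (FF ℓ m) (X (Sum.inr ⟨i, k⟩))

/-- The spectral variables. -/
def spec (t : Fin 2) : FF ℓ m :=
  algebraMap (MvPolynomial (Var ℓ m) ℂ) (FF ℓ m) (X (Sum.inl t))

/-- The algebra automorphism of the polynomial ring shifting the variable `w` by `c`
and fixing all other variables. -/
def shiftPoly (c : ℂ) (w : Var ℓ m) :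
    MvPolynomial (Var ℓ m) ℂ ≃ₐ[ℂ] MvPolynomial (Var ℓ m) ℂ :=
  AlgEquiv.ofAlgHom
    (aeval (fun j => if j = w then X j + MvPolynomial.C c else X j))
    (aeval (fun j => if j = w then X j - MvPolynomial.C c else X j))
    (by apply MvPolynomial.algHom_ext; intro j; by_cases h : j = w <;> simp [h])
    (by apply MvPolynomial.algHom_ext; intro j; by_cases h : j = w <;> simp [h])

/-- The induced automorphism of the field of rational functions. -/
def shiftField (c : ℂ) (w : Var ℓ m) : FF ℓ m ≃+* FF ℓ m :=
  IsFractionRing.ringEquivOfRingEquiv (shiftPoly ℓ m c w).toRingEquiv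

variable (a : Fin ℓ → Fin ℓ → ℤ) (d : Fin ℓ → ℕ) (hb : ℂ)

/-- `β_{i,k}` : the automorphism `γ_{i,k} ↦ γ_{i,k} + iħ·d_i`. -/
def beta (i : Fin ℓ) (k : Fin (m i)) : FF ℓ m ≃+* FF ℓ m :=
  shiftField ℓ m (I * hb * (d i : ℂ)) (Sum.inr ⟨i, k⟩)

/-- The constant `(iħ/2)·(d_i·a_{ij} + 2r·d_j)`, where `r` is offset by one
(so that `r` ranges over `0, …, −a_{ji} − 1` in `Finset.range`). -/
def cf (i j : Fin ℓ) (r : ℕ) : ℂ :=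
  (I * hb / 2) * ((d i : ℂ) * (a i j : ℂ) + 2 * ((r : ℂ) + 1) * (d j : ℂ))

/-- The operator `E_i(w)`. -/
def Eop (i : Fin ℓ) (w : FF ℓ m) : FF ℓ m → FF ℓ m := fun f =>
  cst ℓ m ((d i : ℂ) ^ (-(1/2 : ℂ))) *
    ∑ k : Fin (m i),
      ((∏ j ∈ univ.filter (fun j => i < j), ∏ r ∈ range (-(a j i)).toNat, ∏ p : Fin (m j),
          (gam ℓ m i k - gam ℓ m j p - cst ℓ m (cf ℓ a d hb i j r))) /
        ((w - gam ℓ m i k) * ∏ p ∈ univ.erase k, (gam ℓ m i k - gam ℓ m i p))) *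
      (beta ℓ m d hb i k).symm f

/-- The zero mode `E_i^{(0)}`. -/
def E0op (i : Fin ℓ) : FF ℓ m → FF ℓ m := fun f =>
  cst ℓ m ((d i : ℂ) ^ (-(1/2 : ℂ))) *
    ∑ k : Fin (m i),
      ((∏ j ∈ univ.filter (fun j => i < j), ∏ r ∈ range (-(a j i)).toNat, ∏ p : Fin (m j),
          (gam ℓ m i k - gam ℓ m j p - cst ℓ m (cf ℓ a d hb i j r))) /
        (∏ p ∈ univ.erase k, (gam ℓ m i k - gam ℓ m i p))) *
      (beta ℓ m d hb i k).symm f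

namespace YangAux

variable {ℓ : ℕ} {m : Fin ℓ → ℕ}

lemma algMap_inj :
    Function.Injective (algebraMap (MvPolynomial (Var ℓ m) ℂ) (FF ℓ m)) :=
  IsFractionRing.injective _ _

lemma shiftField_algebraMap (c : ℂ) (w : Var ℓ m) (p : MvPolynomial (Var ℓ m) ℂ) :
    shiftField ℓ m c w (algebraMap _ (FF ℓ m) p)
      = algebraMap _ (FF ℓ m) (shiftPoly ℓ m c w p) :=
  IsFractionRing.ringEquivOfRingEquiv_algebraMap _ p

lemma shiftPoly_X (c : ℂ) (w v : Var ℓ m) :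
    shiftPoly ℓ m c w (X v) = if v = w then X v + C c else X v := by
  simp [shiftPoly]

lemma shiftPoly_C (c c' : ℂ) (w : Var ℓ m) :
    shiftPoly ℓ m c w (C c') = C c' := by
  simp [shiftPoly]

lemma shiftField_C (c c' : ℂ) (w : Var ℓ m) :
    shiftField ℓ m c w (cst ℓ m c') = cst ℓ m c' := by
  show shiftField ℓ m c w (algebraMap (MvPolynomial (Var ℓ m) ℂ) (FF ℓ m) (C c')) = _
  rw [shiftField_algebraMap, shiftPoly_C]; rfl

end YangAux
namespace YangAux

variable {ℓ : ℕ} {m : Fin ℓ → ℕ} {a : Fin ℓ → Fin ℓ → ℤ} {d : Fin ℓ → ℕ} {hb : ℂ}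

lemma rsymm_eq {α β : Type*} [NonAssocSemiring α] [NonAssocSemiring β]
    (e : α ≃+* β) {x : β} {y : α} : e.symm x = y ↔ x = e y :=
  Equiv.symm_apply_eq e.toEquiv

lemma beta_cst (i : Fin ℓ) (k : Fin (m i)) (c : ℂ) :
    beta ℓ m d hb i k (cst ℓ m c) = cst ℓ m c := shiftField_C _ _ _

lemma bs_cst (i : Fin ℓ) (k : Fin (m i)) (c : ℂ) :
    (beta ℓ m d hb i k).symm (cst ℓ m c) = cst ℓ m c := by
  rw [rsymm_eq, beta_cst]

lemma beta_gam_self (i : Fin ℓ) (k : Fin (m i)) :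
    beta ℓ m d hb i k (gam ℓ m i k) = gam ℓ m i k + cst ℓ m (I * hb * (d i : ℂ)) := by
  show shiftField ℓ m _ _ (algebraMap (MvPolynomial (Var ℓ m) ℂ) (FF ℓ m) _) = _
  rw [shiftField_algebraMap, shiftPoly_X, if_pos rfl, RingHom.map_add]
  rfl

lemma bs_gam_self (i : Fin ℓ) (k : Fin (m i)) :
    (beta ℓ m d hb i k).symm (gam ℓ m i k) = gam ℓ m i k - cst ℓ m (I * hb * (d i : ℂ)) := by
  rw [rsymm_eq, map_sub, beta_gam_self, beta_cst]; ring

lemma beta_gam_ne (i : Fin ℓ) (k : Fin (m i)) (j : Fin ℓ) (p : Fin (m j))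
    (h : (⟨j, p⟩ : (i : Fin ℓ) × Fin (m i)) ≠ ⟨i, k⟩) :
    beta ℓ m d hb i k (gam ℓ m j p) = gam ℓ m j p := by
  show shiftField ℓ m _ _ (algebraMap (MvPolynomial (Var ℓ m) ℂ) (FF ℓ m) _) = _
  rw [shiftField_algebraMap, shiftPoly_X, if_neg (by simpa using h)]
  rfl

lemma bs_gam_ne (i : Fin ℓ) (k : Fin (m i)) (j : Fin ℓ) (p : Fin (m j))
    (h : (⟨j, p⟩ : (i : Fin ℓ) × Fin (m i)) ≠ ⟨i, k⟩) :
    (beta ℓ m d hb i k).symm (gam ℓ m j p) = gam ℓ m j p := by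
  rw [rsymm_eq, beta_gam_ne _ _ _ _ h]

lemma bs_gam_ne' (i : Fin ℓ) (k : Fin (m i)) (j : Fin ℓ) (p : Fin (m j))
    (h : j ≠ i) :
    (beta ℓ m d hb i k).symm (gam ℓ m j p) = gam ℓ m j p :=
  bs_gam_ne _ _ _ _ (fun hh => h (congrArg Sigma.fst hh))

lemma beta_spec (i : Fin ℓ) (k : Fin (m i)) (t : Fin 2) :
    beta ℓ m d hb i k (spec ℓ m t) = spec ℓ m t := by
  show shiftField ℓ m _ _ (algebraMap (MvPolynomial (Var ℓ m) ℂ) (FF ℓ m) _) = _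
  rw [shiftField_algebraMap, shiftPoly_X, if_neg (by simp)]
  rfl

lemma bs_spec (i : Fin ℓ) (k : Fin (m i)) (t : Fin 2) :
    (beta ℓ m d hb i k).symm (spec ℓ m t) = spec ℓ m t := by
  rw [rsymm_eq, beta_spec]

lemma shiftPoly_comm (c c' : ℂ) {w w' : Var ℓ m} (h : w ≠ w') (p : MvPolynomial (Var ℓ m) ℂ) :
    shiftPoly ℓ m c w (shiftPoly ℓ m c' w' p) = shiftPoly ℓ m c' w' (shiftPoly ℓ m c w p) := by
  have key : ((shiftPoly ℓ m c w).toAlgHom.comp (shiftPoly ℓ m c' w').toAlgHom)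
      = ((shiftPoly ℓ m c' w').toAlgHom.comp (shiftPoly ℓ m c w).toAlgHom) := by
    apply MvPolynomial.algHom_ext; intro v
    by_cases h1 : v = w
    · subst h1
      simp [shiftPoly_X, if_neg h, shiftPoly_C, map_add]
    · by_cases h2 : v = w'
      · subst h2
        simp [shiftPoly_X, if_neg (Ne.symm h), shiftPoly_C, map_add]
      · simp [shiftPoly_X, h1, h2]
  exact DFunLike.congr_fun key p

lemma shiftField_comm (c c' : ℂ) {w w' : Var ℓ m} (h : w ≠ w') (x : FF ℓ m) :
    shiftField ℓ m c w (shiftField ℓ m c' w' x) = shiftField ℓ m c' w' (shiftField ℓ m c w x) := by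
  have key : (((shiftField ℓ m c w) : FF ℓ m →+* FF ℓ m).comp
        ((shiftField ℓ m c' w' : FF ℓ m ≃+* FF ℓ m) : FF ℓ m →+* FF ℓ m))
      = (((shiftField ℓ m c' w') : FF ℓ m →+* FF ℓ m).comp
        ((shiftField ℓ m c w : FF ℓ m ≃+* FF ℓ m) : FF ℓ m →+* FF ℓ m)) := by
    apply IsLocalization.ringHom_ext (nonZeroDivisors (MvPolynomial (Var ℓ m) ℂ))
    refine RingHom.ext fun p => ?_
    simp only [RingHom.comp_apply, RingHom.coe_coe, shiftField_algebraMap,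
      shiftPoly_comm c c' h p]
  exact DFunLike.congr_fun key x

lemma beta_comm {i j : Fin ℓ} (k : Fin (m i)) (l : Fin (m j)) (hij : i ≠ j) (x : FF ℓ m) :
    beta ℓ m d hb i k (beta ℓ m d hb j l x) = beta ℓ m d hb j l (beta ℓ m d hb i k x) := by
  have hw : (Sum.inr ⟨i, k⟩ : Var ℓ m) ≠ Sum.inr ⟨j, l⟩ := by
    intro hh
    exact hij (congrArg Sigma.fst (Sum.inr.inj hh))
  exact shiftField_comm _ _ hw x

lemma bs_comm {i j : Fin ℓ} (k : Fin (m i)) (l : Fin (m j)) (hij : i ≠ j) (x : FF ℓ m) :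
    (beta ℓ m d hb i k).symm ((beta ℓ m d hb j l).symm x)
      = (beta ℓ m d hb j l).symm ((beta ℓ m d hb i k).symm x) := by
  apply (beta ℓ m d hb j l).injective
  apply (beta ℓ m d hb i k).injective
  rw [beta_comm k l hij ((beta ℓ m d hb i k).symm ((beta ℓ m d hb j l).symm x))]
  rw [RingEquiv.apply_symm_apply, RingEquiv.apply_symm_apply,
    RingEquiv.apply_symm_apply, RingEquiv.apply_symm_apply]

end YangAux
namespace YangAux

variable {ℓ : ℕ} {m : Fin ℓ → ℕ}

lemma var_sub_ne (w w' : Var ℓ m) (h : w ≠ w') :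
    algebraMap (MvPolynomial (Var ℓ m) ℂ) (FF ℓ m) (X w)
      - algebraMap (MvPolynomial (Var ℓ m) ℂ) (FF ℓ m) (X w') ≠ 0 := by
  rw [sub_ne_zero]
  intro hh
  exact h (MvPolynomial.X_injective (algMap_inj hh))

lemma spec_sub_gam_ne (t : Fin 2) (i : Fin ℓ) (k : Fin (m i)) :
    spec ℓ m t - gam ℓ m i k ≠ 0 :=
  var_sub_ne _ _ (by simp)

lemma gam_sub_gam_ne (i : Fin ℓ) (k p : Fin (m i)) (h : p ≠ k) :
    gam ℓ m i k - gam ℓ m i p ≠ 0 := by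
  refine var_sub_ne _ _ ?_
  intro hh
  apply h
  have h2 : (⟨i, k⟩ : (i : Fin ℓ) × Fin (m i)) = ⟨i, p⟩ := Sum.inr.inj hh
  simpa using (Sigma.mk.inj_iff.mp h2).2.symm

/-- Denominator product. -/
def den (i : Fin ℓ) (k : Fin (m i)) : FF ℓ m :=
  ∏ p ∈ univ.erase k, (gam ℓ m i k - gam ℓ m i p)

lemma den_ne_zero (i : Fin ℓ) (k : Fin (m i)) : den (m := m) i k ≠ 0 := by
  rw [den, Finset.prod_ne_zero_iff]
  intro p hp
  exact gam_sub_gam_ne i k p (Finset.ne_of_mem_erase hp)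

variable {a : Fin ℓ → Fin ℓ → ℤ} {d : Fin ℓ → ℕ} {hb : ℂ}

/-- The constant `(iħ/2)(d_i a_{ij} + 2 r d_j)` (without the offset). -/
def ee (a : Fin ℓ → Fin ℓ → ℤ) (d : Fin ℓ → ℕ) (hb : ℂ) (i j : Fin ℓ) (r : ℕ) : ℂ :=
  (I * hb / 2) * ((d i : ℂ) * (a i j : ℂ) + 2 * (r : ℂ) * (d j : ℂ))

lemma cf_eq_ee (i j : Fin ℓ) (r : ℕ) :
    cf ℓ a d hb i j r = ee a d hb i j (r + 1) := by
  simp only [cf, ee]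
  push_cast
  ring

lemma cst_cf_sub (i j : Fin ℓ) (r : ℕ) :
    cst ℓ m (ee a d hb i j (r + 1)) - cst ℓ m (I * hb * (d j : ℂ))
      = cst ℓ m (ee a d hb i j r) := by
  rw [show cst ℓ m = cstHom ℓ m from rfl, ← map_sub]
  congr 1
  simp only [ee]
  push_cast
  ring

/-- Telescoping identity for the product of shifted factors. -/
lemma tele (i j : Fin ℓ) (hji : a j i ≤ 0)
    (hsym1 : (d i : ℤ) * a i j = (d j : ℤ) * a j i) (hdi : 0 < d i) (g : FF ℓ m) :
    g * ((∏ r ∈ range (-(a j i)).toNat, (g - cst ℓ m (ee a d hb i j (r + 1)))) -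
         (∏ r ∈ range (-(a j i)).toNat, (g - cst ℓ m (ee a d hb i j r))))
  = cst ℓ m ((I * hb / 2) * ((d i : ℂ) * (a i j : ℂ))) *
      ((∏ r ∈ range (-(a j i)).toNat, (g - cst ℓ m (ee a d hb i j (r + 1)))) +
       (∏ r ∈ range (-(a j i)).toNat, (g - cst ℓ m (ee a d hb i j r)))) := by
  rcases Nat.eq_zero_or_eq_succ_pred (-(a j i)).toNat with hn | hn
  · have hji0 : a j i = 0 := by omega
    have haij0 : a i j = 0 := by
      have h1 := hsym1
      rw [hji0, mul_zero] at h1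
      have : (d i : ℤ) ≠ 0 := by exact_mod_cast hdi.ne'
      exact (mul_eq_zero.mp h1).resolve_left this
    rw [hn]
    simp only [range_zero, prod_empty, sub_self, mul_zero, haij0]
    push_cast
    rw [mul_zero, show cst ℓ m = cstHom ℓ m from rfl]
    simp
  · obtain ⟨s, hn⟩ : ∃ s, (-(a j i)).toNat = s + 1 := ⟨_, hn⟩
    rw [hn]
    have hval : a j i = -((s : ℤ) + 1) := by omega
    rw [prod_range_succ, prod_range_succ']
    have hopp : ee a d hb i j (s + 1) = -(ee a d hb i j 0) := by
      have hdia : (d i : ℂ) * (a i j : ℂ) = -((s : ℂ) + 1) * (d j : ℂ) := by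
        have h1 := congrArg (Int.cast : ℤ → ℂ) hsym1
        push_cast at h1
        rw [h1, hval]
        push_cast
        ring
      simp only [ee, hdia]
      push_cast
      ring
    have key : cst ℓ m (ee a d hb i j (s + 1)) = -(cst ℓ m (ee a d hb i j 0)) := by
      rw [hopp, show cst ℓ m = cstHom ℓ m from rfl, map_neg]
    have key0 : cst ℓ m ((I * hb / 2) * ((d i : ℂ) * (a i j : ℂ)))
        = cst ℓ m (ee a d hb i j 0) := by
      congr 1
      simp only [ee]
      ring
    rw [key, key0]
    ring

end YangAux
namespace YangAux

variable {ℓ : ℕ} {m : Fin ℓ → ℕ} {a : Fin ℓ → Fin ℓ → ℤ} {d : Fin ℓ → ℕ} {hb : ℂ}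

/-- Numerator product. -/
def num (a : Fin ℓ → Fin ℓ → ℤ) (d : Fin ℓ → ℕ) (hb : ℂ) (i : Fin ℓ) (k : Fin (m i)) :
    FF ℓ m :=
  ∏ j ∈ univ.filter (fun j => i < j), ∏ r ∈ range (-(a j i)).toNat, ∏ p : Fin (m j),
    (gam ℓ m i k - gam ℓ m j p - cst ℓ m (cf ℓ a d hb i j r))

lemma Eop_apply (i : Fin ℓ) (w : FF ℓ m) (f : FF ℓ m) :
    Eop ℓ m a d hb i w f
      = cst ℓ m ((d i : ℂ) ^ (-(1/2 : ℂ))) *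
          ∑ k : Fin (m i),
            (num a d hb i k / ((w - gam ℓ m i k) * den i k)) *
              (beta ℓ m d hb i k).symm f := rfl

lemma E0op_apply (i : Fin ℓ) (f : FF ℓ m) :
    E0op ℓ m a d hb i f
      = cst ℓ m ((d i : ℂ) ^ (-(1/2 : ℂ))) *
          ∑ k : Fin (m i),
            (num a d hb i k / den i k) * (beta ℓ m d hb i k).symm f := rfl

lemma bs_den (i : Fin ℓ) (k : Fin (m i)) (j : Fin ℓ) (l : Fin (m j)) (h : j ≠ i) :
    (beta ℓ m d hb i k).symm (den j l) = den (m := m) j l := by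
  rw [den, map_prod]
  refine prod_congr rfl fun p _ => ?_
  rw [map_sub, bs_gam_ne' _ _ _ _ h, bs_gam_ne' _ _ _ _ h]

/-- `β_{i,k}⁻¹` fixes `num j l` when `i < j`. -/
lemma bs_num_fix {i j : Fin ℓ} (h : i < j) (k : Fin (m i)) (l : Fin (m j)) :
    (beta ℓ m d hb i k).symm (num a d hb j l) = num a d hb j l := by
  rw [num, map_prod]
  refine prod_congr rfl fun j' hj' => ?_
  rw [map_prod]
  refine prod_congr rfl fun r _ => ?_
  rw [map_prod]
  refine prod_congr rfl fun p _ => ?_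
  have hj'i : j' ≠ i := by
    have := (mem_filter.mp hj').2
    exact fun hh => absurd (hh ▸ this) (lt_asymm h)
  rw [map_sub, map_sub, bs_gam_ne' _ _ _ _ h.ne', bs_gam_ne' _ _ _ _ hj'i, bs_cst]

/-- Splitting `num i k` at the position `j > i`, relative to `l : Fin (m j)`. -/
lemma num_split {i j : Fin ℓ} (h : i < j) (k : Fin (m i)) (l : Fin (m j)) :
    num a d hb i k
      = (∏ r ∈ range (-(a j i)).toNat,
            (gam ℓ m i k - gam ℓ m j l - cst ℓ m (ee a d hb i j (r + 1))))
        * ((∏ r ∈ range (-(a j i)).toNat, ∏ p ∈ univ.erase l,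
              (gam ℓ m i k - gam ℓ m j p - cst ℓ m (cf ℓ a d hb i j r)))
          * ∏ j' ∈ (univ.filter (fun j' => i < j')).erase j,
              ∏ r ∈ range (-(a j' i)).toNat, ∏ p : Fin (m j'),
                (gam ℓ m i k - gam ℓ m j' p - cst ℓ m (cf ℓ a d hb i j' r))) := by
  rw [num, ← Finset.mul_prod_erase _ _ (mem_filter.mpr ⟨mem_univ j, h⟩), ← mul_assoc]
  congr 1
  rw [← prod_mul_distrib]
  refine prod_congr rfl fun r _ => ?_
  rw [← Finset.mul_prod_erase _ _ (mem_univ l)]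
  congr 1
  rw [cf_eq_ee]

/-- The action of `β_{j,l}⁻¹` on `num i k` for `i < j`. -/
lemma bs_num_split {i j : Fin ℓ} (h : i < j) (k : Fin (m i)) (l : Fin (m j)) :
    (beta ℓ m d hb j l).symm (num a d hb i k)
      = (∏ r ∈ range (-(a j i)).toNat,
            (gam ℓ m i k - gam ℓ m j l - cst ℓ m (ee a d hb i j r)))
        * ((∏ r ∈ range (-(a j i)).toNat, ∏ p ∈ univ.erase l,
              (gam ℓ m i k - gam ℓ m j p - cst ℓ m (cf ℓ a d hb i j r)))
          * ∏ j' ∈ (univ.filter (fun j' => i < j')).erase j,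
              ∏ r ∈ range (-(a j' i)).toNat, ∏ p : Fin (m j'),
                (gam ℓ m i k - gam ℓ m j' p - cst ℓ m (cf ℓ a d hb i j' r))) := by
  rw [num_split h k l, map_mul, map_mul]
  congr 1
  · rw [map_prod]
    refine prod_congr rfl fun r _ => ?_
    rw [map_sub, map_sub, bs_gam_ne' _ _ _ _ h.ne, bs_gam_self, bs_cst]
    linear_combination -cst_cf_sub (m := m) (a := a) (d := d) (hb := hb) i j r
  congr 1
  · rw [map_prod]
    refine prod_congr rfl fun r _ => ?_
    rw [map_prod]
    refine prod_congr rfl fun p hp => ?_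
    have hpl : (⟨j, p⟩ : (i : Fin ℓ) × Fin (m i)) ≠ ⟨j, l⟩ := by
      intro hh
      exact (Finset.ne_of_mem_erase hp) (by simpa using (Sigma.mk.inj_iff.mp hh).2)
    rw [map_sub, map_sub, bs_gam_ne' _ _ _ _ h.ne, bs_gam_ne _ _ _ _ hpl, bs_cst]
  · rw [map_prod]
    refine prod_congr rfl fun j' hj' => ?_
    have hj'j : j' ≠ j := Finset.ne_of_mem_erase hj'
    rw [map_prod]
    refine prod_congr rfl fun r _ => ?_
    rw [map_prod]
    refine prod_congr rfl fun p _ => ?_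
    rw [map_sub, map_sub, bs_gam_ne' _ _ _ _ h.ne, bs_gam_ne' _ _ _ _ hj'j, bs_cst]

end YangAux
namespace YangAux

variable {ℓ : ℕ} {m : Fin ℓ → ℕ} {a : Fin ℓ → Fin ℓ → ℤ} {d : Fin ℓ → ℕ} {hb : ℂ}

lemma core_aux1 (g U S B WR c : FF ℓ m) (ht : g * (U - S) = c * (U + S)) :
    g * ((U * WR) * B - B * (S * WR)) = c * ((U * WR) * B + B * (S * WR)) := by
  linear_combination (B * WR) * ht

lemma core_aux2 (g V V' WR A c : FF ℓ m) (ht : g * (V - V') = c * (V + V')) :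
    (-g) * (A * (V' * WR) - (V * WR) * A) = c * (A * (V' * WR) + (V * WR) * A) := by
  linear_combination (A * WR) * ht

/-- The core identity. -/
lemma core (ha' : ∀ i j : Fin ℓ, i ≠ j → a i j ≤ 0) (hd : ∀ i, 0 < d i)
    (hsym : ∀ i j, (d i : ℤ) * a i j = (d j : ℤ) * a j i)
    (i j : Fin ℓ) (hij : i ≠ j) (k : Fin (m i)) (l : Fin (m j)) :
    (gam ℓ m i k - gam ℓ m j l) *
        (num a d hb i k * (beta ℓ m d hb i k).symm (num a d hb j l)
          - num a d hb j l * (beta ℓ m d hb j l).symm (num a d hb i k))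
      = cst ℓ m ((I * hb / 2) * ((d i : ℂ) * (a i j : ℂ))) *
        (num a d hb i k * (beta ℓ m d hb i k).symm (num a d hb j l)
          + num a d hb j l * (beta ℓ m d hb j l).symm (num a d hb i k)) := by
  rcases hij.lt_or_gt with h | h
  · rw [bs_num_fix h k l, bs_num_split h k l, num_split h k l]
    exact core_aux1 _ _ _ _ _ _
      (tele (hb := hb) i j (ha' j i (ne_of_gt h)) (hsym i j) (hd i) (gam ℓ m i k - gam ℓ m j l))
  · -- j < i
    rw [bs_num_fix h l k, bs_num_split h l k, num_split h l k]
    have ht := tele (hb := hb) j i (ha' i j (ne_of_gt h)) (hsym j i) (hd j) (gam ℓ m j l - gam ℓ m i k)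
    have hc : cst ℓ m ((I * hb / 2) * ((d j : ℂ) * (a j i : ℂ)))
        = cst ℓ m ((I * hb / 2) * ((d i : ℂ) * (a i j : ℂ))) := by
      congr 1
      have h1 := congrArg (Int.cast : ℤ → ℂ) (hsym i j)
      push_cast at h1
      rw [h1]
    rw [hc] at ht
    rw [show gam ℓ m i k - gam ℓ m j l = -(gam ℓ m j l - gam ℓ m i k) by ring]
    exact core_aux2 _ _ _ _ _ _ ht

end YangAux
namespace YangAux

variable {ℓ : ℕ} {m : Fin ℓ → ℕ} {a : Fin ℓ → Fin ℓ → ℤ} {d : Fin ℓ → ℕ} {hb : ℂ}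

lemma Eop_Eop (i j : Fin ℓ) (hij : i ≠ j) (t t' : Fin 2) (f : FF ℓ m) :
    Eop ℓ m a d hb i (spec ℓ m t) (Eop ℓ m a d hb j (spec ℓ m t') f)
  = ∑ k : Fin (m i), ∑ l : Fin (m j),
      (cst ℓ m ((d i : ℂ) ^ (-(1/2:ℂ))) * cst ℓ m ((d j : ℂ) ^ (-(1/2:ℂ)))) *
      ((num a d hb i k / ((spec ℓ m t - gam ℓ m i k) * den i k)) *
       ((beta ℓ m d hb i k).symm (num a d hb j l)
          / ((spec ℓ m t' - gam ℓ m j l) * den j l))) *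
      (beta ℓ m d hb i k).symm ((beta ℓ m d hb j l).symm f) := by
  rw [Eop_apply, Eop_apply]
  simp only [map_mul, map_sum, map_div₀, map_sub, bs_cst, bs_spec, Finset.mul_sum]
  refine Finset.sum_congr rfl fun k _ => Finset.sum_congr rfl fun l _ => ?_
  rw [bs_gam_ne' _ _ _ _ (Ne.symm hij), bs_den _ _ _ _ (Ne.symm hij)]
  ring

lemma Eop_Eop' (i j : Fin ℓ) (hij : i ≠ j) (t t' : Fin 2) (f : FF ℓ m) :
    Eop ℓ m a d hb j (spec ℓ m t') (Eop ℓ m a d hb i (spec ℓ m t) f)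
  = ∑ k : Fin (m i), ∑ l : Fin (m j),
      (cst ℓ m ((d i : ℂ) ^ (-(1/2:ℂ))) * cst ℓ m ((d j : ℂ) ^ (-(1/2:ℂ)))) *
      ((num a d hb j l / ((spec ℓ m t' - gam ℓ m j l) * den j l)) *
       ((beta ℓ m d hb j l).symm (num a d hb i k)
          / ((spec ℓ m t - gam ℓ m i k) * den i k))) *
      (beta ℓ m d hb i k).symm ((beta ℓ m d hb j l).symm f) := by
  rw [Eop_apply, Eop_apply]
  simp only [map_mul, map_sum, map_div₀, map_sub, bs_cst, bs_spec, Finset.mul_sum]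
  rw [Finset.sum_comm]
  refine Finset.sum_congr rfl fun k _ => Finset.sum_congr rfl fun l _ => ?_
  rw [bs_gam_ne' _ _ _ _ hij, bs_den _ _ _ _ hij, bs_comm l k (Ne.symm hij) f]
  ring

lemma E0_Eop (i j : Fin ℓ) (hij : i ≠ j) (t' : Fin 2) (f : FF ℓ m) :
    E0op ℓ m a d hb i (Eop ℓ m a d hb j (spec ℓ m t') f)
  = ∑ k : Fin (m i), ∑ l : Fin (m j),
      (cst ℓ m ((d i : ℂ) ^ (-(1/2:ℂ))) * cst ℓ m ((d j : ℂ) ^ (-(1/2:ℂ)))) *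
      ((num a d hb i k / den i k) *
       ((beta ℓ m d hb i k).symm (num a d hb j l)
          / ((spec ℓ m t' - gam ℓ m j l) * den j l))) *
      (beta ℓ m d hb i k).symm ((beta ℓ m d hb j l).symm f) := by
  rw [E0op_apply, Eop_apply]
  simp only [map_mul, map_sum, map_div₀, map_sub, bs_cst, bs_spec, Finset.mul_sum]
  refine Finset.sum_congr rfl fun k _ => Finset.sum_congr rfl fun l _ => ?_
  rw [bs_gam_ne' _ _ _ _ (Ne.symm hij), bs_den _ _ _ _ (Ne.symm hij)]
  ring

lemma Eop_E0 (i j : Fin ℓ) (hij : i ≠ j) (t' : Fin 2) (f : FF ℓ m) :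
    Eop ℓ m a d hb j (spec ℓ m t') (E0op ℓ m a d hb i f)
  = ∑ k : Fin (m i), ∑ l : Fin (m j),
      (cst ℓ m ((d i : ℂ) ^ (-(1/2:ℂ))) * cst ℓ m ((d j : ℂ) ^ (-(1/2:ℂ)))) *
      ((num a d hb j l / ((spec ℓ m t' - gam ℓ m j l) * den j l)) *
       ((beta ℓ m d hb j l).symm (num a d hb i k) / den i k)) *
      (beta ℓ m d hb i k).symm ((beta ℓ m d hb j l).symm f) := by
  rw [Eop_apply, E0op_apply]
  simp only [map_mul, map_sum, map_div₀, map_sub, bs_cst, bs_spec, Finset.mul_sum]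
  rw [Finset.sum_comm]
  refine Finset.sum_congr rfl fun k _ => Finset.sum_congr rfl fun l _ => ?_
  rw [bs_den _ _ _ _ hij, bs_comm l k (Ne.symm hij) f]
  ring

end YangAux
namespace YangAux

variable {ℓ : ℕ} {m : Fin ℓ → ℕ} {a : Fin ℓ → Fin ℓ → ℤ} {d : Fin ℓ → ℕ} {hb : ℂ}

lemma coef_identity {F : Type*} [Field F] (u v gi gj Bi Bj A A' B B' c : F)
    (hu : u - gi ≠ 0) (hju : u - gj ≠ 0) (hjv : v - gj ≠ 0) (hBi : Bi ≠ 0) (hBj : Bj ≠ 0)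
    (hcore : (gi - gj) * (A * B' - B * A') = c * (A * B' + B * A')) :
    (u - v) * ((A / ((u - gi) * Bi)) * (B' / ((v - gj) * Bj))
        - (B / ((v - gj) * Bj)) * (A' / ((u - gi) * Bi)))
  = (-c) * ((A / ((u - gi) * Bi)) * (B' / ((u - gj) * Bj))
          - (A / ((u - gi) * Bi)) * (B' / ((v - gj) * Bj))
        + ((B / ((u - gj) * Bj)) * (A' / ((u - gi) * Bi))
          - (B / ((v - gj) * Bj)) * (A' / ((u - gi) * Bi))))
    - ((A / Bi) * (B' / ((u - gj) * Bj)) - (A / Bi) * (B' / ((v - gj) * Bj))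
        - ((B / ((u - gj) * Bj)) * (A' / Bi) - (B / ((v - gj) * Bj)) * (A' / Bi))) := by
  set D1 := u - gi
  set D2 := u - gj
  set D3 := v - gj
  have hbig : D1 * D2 * D3 * Bi * Bj ≠ 0 :=
    mul_ne_zero (mul_ne_zero (mul_ne_zero (mul_ne_zero hu hju) hjv) hBi) hBj
  have t1 : (A / (D1 * Bi)) * (B' / (D3 * Bj)) = (A * B' * D2) / (D1 * D2 * D3 * Bi * Bj) := by
    rw [div_mul_div_comm, div_eq_div_iff (by simp [mul_ne_zero, hu, hjv, hBi, hBj]) hbig]; ring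
  have t2 : (B / (D3 * Bj)) * (A' / (D1 * Bi)) = (B * A' * D2) / (D1 * D2 * D3 * Bi * Bj) := by
    rw [div_mul_div_comm, div_eq_div_iff (by simp [mul_ne_zero, hu, hjv, hBi, hBj]) hbig]; ring
  have t3 : (A / (D1 * Bi)) * (B' / (D2 * Bj)) = (A * B' * D3) / (D1 * D2 * D3 * Bi * Bj) := by
    rw [div_mul_div_comm, div_eq_div_iff (by simp [mul_ne_zero, hu, hju, hBi, hBj]) hbig]; ring
  have t5 : (B / (D2 * Bj)) * (A' / (D1 * Bi)) = (B * A' * D3) / (D1 * D2 * D3 * Bi * Bj) := by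
    rw [div_mul_div_comm, div_eq_div_iff (by simp [mul_ne_zero, hu, hju, hBi, hBj]) hbig]; ring
  have t7 : (A / Bi) * (B' / (D2 * Bj)) = (A * B' * (D1 * D3)) / (D1 * D2 * D3 * Bi * Bj) := by
    rw [div_mul_div_comm, div_eq_div_iff (by simp [mul_ne_zero, hju, hBi, hBj]) hbig]; ring
  have t8 : (A / Bi) * (B' / (D3 * Bj)) = (A * B' * (D1 * D2)) / (D1 * D2 * D3 * Bi * Bj) := by
    rw [div_mul_div_comm, div_eq_div_iff (by simp [mul_ne_zero, hjv, hBi, hBj]) hbig]; ring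
  have t9 : (B / (D2 * Bj)) * (A' / Bi) = (B * A' * (D1 * D3)) / (D1 * D2 * D3 * Bi * Bj) := by
    rw [div_mul_div_comm, div_eq_div_iff (by simp [mul_ne_zero, hju, hBi, hBj]) hbig]; ring
  have t10 : (B / (D3 * Bj)) * (A' / Bi) = (B * A' * (D1 * D2)) / (D1 * D2 * D3 * Bi * Bj) := by
    rw [div_mul_div_comm, div_eq_div_iff (by simp [mul_ne_zero, hjv, hBi, hBj]) hbig]; ring
  rw [t1, t2, t3, t5, t7, t8, t9, t10]
  rw [div_eq_mul_inv, div_eq_mul_inv, div_eq_mul_inv, div_eq_mul_inv, div_eq_mul_inv,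
    div_eq_mul_inv, div_eq_mul_inv, div_eq_mul_inv]
  linear_combination ((u - v) * (D1 * D2 * D3 * Bi * Bj)⁻¹) * hcore

lemma Eop_sub (i : Fin ℓ) (w x y : FF ℓ m) :
    Eop ℓ m a d hb i w (x - y) = Eop ℓ m a d hb i w x - Eop ℓ m a d hb i w y := by
  rw [Eop_apply, Eop_apply, Eop_apply]
  simp only [map_sub, mul_sub, Finset.sum_sub_distrib]

lemma E0op_sub (i : Fin ℓ) (x y : FF ℓ m) :
    E0op ℓ m a d hb i (x - y) = E0op ℓ m a d hb i x - E0op ℓ m a d hb i y := by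
  rw [E0op_apply, E0op_apply, E0op_apply]
  simp only [map_sub, mul_sub, Finset.sum_sub_distrib]

end YangAux
open YangAux in
/-- the Yangian mixed raising relation. -/
theorem yangian_EE_mixed
    (ℓ : ℕ) (hl : 1 ≤ ℓ)
    (a : Fin ℓ → Fin ℓ → ℤ) (ha : ∀ i, a i i = 2) (ha' : ∀ i j, i ≠ j → a i j ≤ 0)
    (d : Fin ℓ → ℕ) (hd : ∀ i, 0 < d i)
    (hsym : ∀ i j, (d i : ℤ) * a i j = (d j : ℤ) * a j i)
    (hb : ℂ) (m : Fin ℓ → ℕ) (hm : ∀ i, 0 < m i)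
    (i j : Fin ℓ) (hij : i ≠ j) :
    (spec ℓ m 0 - spec ℓ m 1) •
        (Eop ℓ m a d hb i (spec ℓ m 0) ∘ Eop ℓ m a d hb j (spec ℓ m 1)
          - Eop ℓ m a d hb j (spec ℓ m 1) ∘ Eop ℓ m a d hb i (spec ℓ m 0))
      = cst ℓ m (-(I * hb / 2) * ((d i : ℂ) * (a i j : ℂ))) •
          (Eop ℓ m a d hb i (spec ℓ m 0) ∘
              (Eop ℓ m a d hb j (spec ℓ m 0) - Eop ℓ m a d hb j (spec ℓ m 1))
            + (Eop ℓ m a d hb j (spec ℓ m 0) - Eop ℓ m a d hb j (spec ℓ m 1)) ∘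
              Eop ℓ m a d hb i (spec ℓ m 0))
        - (E0op ℓ m a d hb i ∘
              (Eop ℓ m a d hb j (spec ℓ m 0) - Eop ℓ m a d hb j (spec ℓ m 1))
            - (Eop ℓ m a d hb j (spec ℓ m 0) - Eop ℓ m a d hb j (spec ℓ m 1)) ∘
              E0op ℓ m a d hb i) := by
  funext f
  simp only [Pi.smul_apply, Pi.sub_apply, Pi.add_apply, Function.comp_apply, smul_eq_mul]
  rw [Eop_sub, E0op_sub]
  rw [Eop_Eop i j hij 0 1 f, Eop_Eop' i j hij 0 1 f,
      Eop_Eop i j hij 0 0 f, Eop_Eop' i j hij 0 0 f,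
      E0_Eop i j hij 0 f, E0_Eop i j hij 1 f,
      Eop_E0 i j hij 0 f, Eop_E0 i j hij 1 f]
  have hcc : cst ℓ m (-(I * hb / 2) * ((d i : ℂ) * (a i j : ℂ)))
      = -cst ℓ m ((I * hb / 2) * ((d i : ℂ) * (a i j : ℂ))) := by
    rw [show cst ℓ m = ⇑(cstHom ℓ m) from rfl, ← map_neg]
    congr 1
    ring
  rw [hcc]
  simp only [Finset.mul_sum, ← Finset.sum_sub_distrib, ← Finset.sum_add_distrib, neg_mul,
    ← Finset.sum_neg_distrib]
  refine Finset.sum_congr rfl fun k _ => Finset.sum_congr rfl fun l _ => ?_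
  have hkey := coef_identity (spec ℓ m 0) (spec ℓ m 1) (gam ℓ m i k) (gam ℓ m j l)
    (den i k) (den j l) (num a d hb i k) ((beta ℓ m d hb j l).symm (num a d hb i k))
    (num a d hb j l) ((beta ℓ m d hb i k).symm (num a d hb j l))
    (cst ℓ m ((I * hb / 2) * ((d i : ℂ) * (a i j : ℂ))))
    (spec_sub_gam_ne 0 i k) (spec_sub_gam_ne 0 j l) (spec_sub_gam_ne 1 j l)
    (den_ne_zero i k) (den_ne_zero j l)
    (core ha' hd hsym i j hij k l)
  linear_combination (cst ℓ m ((d i : ℂ) ^ (-(1/2:ℂ))) * cst ℓ m ((d j : ℂ) ^ (-(1/2:ℂ))) *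
    (beta ℓ m d hb i k).symm ((beta ℓ m d hb j l).symm f)) * hkey
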